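/- Let G be a Fischer space of symplectic type, ℓ = {a,b,c} a line in two distinct complete quadrilaterals π (extra points x,y,z) and π' (extra points p,q,r) as labeled before. If p ≁ x, then p ∼ y, p ∼ z, q ∼ x, q ∼ z, q ≁ y, r ∼ x, r ∼ y, r ≁ z; moreover setting d := r∧y = q∧z, e := r∧x = p∧z, f := q∧x = p∧y, the points a,b,c,d,e,f form a third complete quadrilateral through ℓ (with lines {a,e,f},{b,d,f},{c,d,e}). -/

import Mathlib

/-- A partial triple system, given by a collinearity relation `col` and a map `third`
sending two distinct collinear points to the third point on their line. -/
structure IsPTS {P : Type*} (col : P → P → Prop) (third : P → P → P) : Prop where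
  symm : ∀ x y, col x y → col y x
  irrefl : ∀ x, ¬ col x x
  third_symm : ∀ x y, col x y → third x y = third y x
  col_third : ∀ x y, col x y → col x (third x y)
  third_ne_left : ∀ x y, col x y → third x y ≠ x
  third_ne_right : ∀ x y, col x y → third x y ≠ y
  third_third : ∀ x y, col x y → third x (third x y) = y
  unique_line : ∀ x y u v, col x y → col u v →
    x ∈ ({u, v, third u v} : Set P) → y ∈ ({u, v, third u v} : Set P) →
    ({x, y, third x y} : Set P) = {u, v, third u v}

/-- A subspace of a partial triple system: a set of points closed under taking
the third point of a line through two of its points. -/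
def IsSubspace {P : Type*} (col : P → P → Prop) (third : P → P → P) (S : Set P) : Prop :=
  ∀ x ∈ S, ∀ y ∈ S, col x y → third x y ∈ S

/-- The subspace generated by a set of points. -/
def fclosure {P : Type*} (col : P → P → Prop) (third : P → P → P) (T : Set P) : Set P :=
  ⋂₀ {S | T ⊆ S ∧ IsSubspace col third S}

/-- The line through two distinct collinear points, as a set. -/
def lineSet {P : Type*} (third : P → P → P) (x y : P) : Set P := {x, y, third x y}

/-- The six points of the complete quadrilateral (dual affine plane of order 2). -/
inductive CQPt | A | B | C | X | Y | Z
deriving DecidableEq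

/-- The "opposite point" involution of the complete quadrilateral. -/
def CQPt.opp : CQPt → CQPt
  | .A => .X | .X => .A | .B => .Y | .Y => .B | .C => .Z | .Z => .C

/-- Collinearity in the complete quadrilateral with lines
{A,B,C}, {A,Y,Z}, {B,X,Z}, {C,X,Y}: two points are collinear iff they are
distinct and not opposite. -/
def CQPt.col (p q : CQPt) : Prop := p ≠ q ∧ q ≠ p.opp

/-- The third point on the line through two distinct collinear points of the
complete quadrilateral. -/
def CQPt.third : CQPt → CQPt → CQPt
  | .A, .B => .C | .B, .A => .C | .A, .C => .B | .C, .A => .B | .B, .C => .A | .C, .B => .A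
  | .A, .Y => .Z | .Y, .A => .Z | .A, .Z => .Y | .Z, .A => .Y | .Y, .Z => .A | .Z, .Y => .A
  | .B, .X => .Z | .X, .B => .Z | .B, .Z => .X | .Z, .B => .X | .X, .Z => .B | .Z, .X => .B
  | .C, .X => .Y | .X, .C => .Y | .C, .Y => .X | .Y, .C => .X | .X, .Y => .C | .Y, .X => .C
  | p, _ => p

/-- A set of points is a complete quadrilateral if it is the isomorphic image of
the standard one (preserving collinearity and the `third` operation). -/
def IsCQSet {P : Type*} (col : P → P → Prop) (third : P → P → P) (S : Set P) : Prop :=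
  ∃ f : CQPt → P, Function.Injective f ∧ Set.range f = S ∧
    (∀ u v, col (f u) (f v) ↔ CQPt.col u v) ∧
    (∀ u v, CQPt.col u v → f (CQPt.third u v) = third (f u) (f v))

/-- A set of points is an affine plane of order 3 if it is the isomorphic image of
`AG(2,3)` (any two distinct points collinear, third point `-(u+v)`). -/
def IsAPSet {P : Type*} (col : P → P → Prop) (third : P → P → P) (S : Set P) : Prop :=
  ∃ f : ZMod 3 × ZMod 3 → P, Function.Injective f ∧ Set.range f = S ∧
    (∀ u v, col (f u) (f v) ↔ u ≠ v) ∧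
    (∀ u v, u ≠ v → f (-(u + v)) = third (f u) (f v))

/-- A Fischer space: a partial triple system in which the subspace generated by two
distinct intersecting lines is a complete quadrilateral or an affine plane of order 3. -/
structure IsFischer {P : Type*} (col : P → P → Prop) (third : P → P → P)
    extends IsPTS col third : Prop where
  dichotomy : ∀ x y u v, col x y → col u v →
    lineSet third x y ≠ lineSet third u v →
    (lineSet third x y ∩ lineSet third u v).Nonempty →
    IsCQSet col third (fclosure col third (lineSet third x y ∪ lineSet third u v)) ∨
    IsAPSet col third (fclosure col third (lineSet third x y ∪ lineSet third u v))

/-- A Fischer space of symplectic type: the subspace generated by two distinct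
intersecting lines is always a complete quadrilateral. -/
structure IsSymplectic {P : Type*} (col : P → P → Prop) (third : P → P → P)
    extends IsPTS col third : Prop where
  cq : ∀ x y u v, col x y → col u v →
    lineSet third x y ≠ lineSet third u v →
    (lineSet third x y ∩ lineSet third u v).Nonempty →
    IsCQSet col third (fclosure col third (lineSet third x y ∪ lineSet third u v))

/-- The six points `a,b,c,x,y,z` form a complete quadrilateral with lines
{a,b,c}, {a,y,z}, {b,x,z}, {c,x,y}. -/
def IsCQThrough {P : Type*} (col : P → P → Prop) (third : P → P → P)
    (a b c x y z : P) : Prop :=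
  [a, b, c, x, y, z].Pairwise (· ≠ ·) ∧
  col a b ∧ third a b = c ∧
  col a y ∧ third a y = z ∧
  col b x ∧ third b x = z ∧
  col c x ∧ third c x = y ∧
  ¬ col a x ∧ ¬ col b y ∧ ¬ col c z

/-!
Every plane spanned by two intersecting lines is a complete quadrilateral, and facts about a
single quadrilateral are read off the six-point model by a finite check. Since `x ≁ p`, the
points `x` and `p` are opposite in the planes spanned at `c` and at `b` by the lines of `π` and
`π'`; this gives `q ∼ x`, `p ∼ y`, `r ∼ x`, `p ∼ z`, `y ≁ q`, `z ≁ r` and identifies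
`f = q∧x = p∧y`, `e = r∧x = p∧z`. Then `y` and `q` are opposite in the plane at `a`, giving
`d = r∧y = q∧z`. Finally `{z, q, p}`, `{y, r, p}` and `{x, r, q}` are triangles, and the plane
at their vertex `z` (resp. `y`, `x`) shows that `{c, d, e}` (resp. `{b, d, f}`, `{a, e, f}`)
is a line.
-/

instance : Fintype CQPt :=
  ⟨⟨{.A, .B, .C, .X, .Y, .Z}, by decide⟩, fun x => by cases x <;> decide⟩

instance (p q : CQPt) : Decidable (CQPt.col p q) :=
  inferInstanceAs (Decidable (_ ∧ _))

namespace CQPt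

theorem opposite_points : ∀ M U S : CQPt, col M U → col M S → ¬ col U S → U ≠ S →
    col (third M S) U ∧ col S (third M U) ∧ ¬ col (third M S) (third M U) ∧
    third (third M S) U = third S (third M U) ∧
    ¬ col M (third (third M S) U) ∧ M ≠ third (third M S) U := by
  decide

theorem col_third_of_triangle : ∀ M U S : CQPt, col M U → col M S → col U S → third U S ≠ M →
    col (third M U) (third M S) ∧ third (third M U) (third M S) = third U S := by
  decide

end CQPt

def IsLine {P : Type*} (col : P → P → Prop) (third : P → P → P) (a b c : P) : Prop :=
  col a b ∧ third a b = c

structure IsCQEmbedding {P : Type*} (col : P → P → Prop) (third : P → P → P)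
    (f : CQPt → P) : Prop where
  injective : Function.Injective f
  col_iff : ∀ U V, col (f U) (f V) ↔ CQPt.col U V
  map_third : ∀ {U V}, CQPt.col U V → f (CQPt.third U V) = third (f U) (f V)

section

variable {P : Type*} {col : P → P → Prop} {third : P → P → P} {a b c : P}

theorem IsPTS.ne_of_col (hP : IsPTS col third) {u v : P} (h : col u v) : u ≠ v :=
  fun he => hP.irrefl v (he ▸ h)

namespace IsLine

theorem swap (hP : IsPTS col third) (h : IsLine col third a b c) : IsLine col third b a c :=
  ⟨hP.symm _ _ h.1, (hP.third_symm _ _ h.1).symm.trans h.2⟩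

theorem rotate (hP : IsPTS col third) (h : IsLine col third a b c) : IsLine col third c a b := by
  obtain ⟨hab, rfl⟩ := h
  exact swap hP ⟨hP.col_third a b hab, hP.third_third a b hab⟩

theorem ne₁₂ (hP : IsPTS col third) (h : IsLine col third a b c) : a ≠ b := hP.ne_of_col h.1

theorem ne₁₃ (hP : IsPTS col third) (h : IsLine col third a b c) : a ≠ c :=
  fun e => hP.third_ne_left a b h.1 (h.2.trans e.symm)

theorem ne₂₃ (hP : IsPTS col third) (h : IsLine col third a b c) : b ≠ c :=
  fun e => hP.third_ne_right a b h.1 (h.2.trans e.symm)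

end IsLine

theorem IsPTS.isCQThrough (hP : IsPTS col third) {x y z : P}
    (habc : IsLine col third a b c) (hayz : IsLine col third a y z)
    (hbxz : IsLine col third b x z) (hcxy : IsLine col third c x y)
    (hax : ¬ col a x) (hby : ¬ col b y) (hcz : ¬ col c z)
    (hax' : a ≠ x) (hby' : b ≠ y) (hcz' : c ≠ z) :
    IsCQThrough col third a b c x y z := by
  refine ⟨?_, habc.1, habc.2, hayz.1, hayz.2, hbxz.1, hbxz.2, hcxy.1, hcxy.2, hax, hby, hcz⟩
  simp only [List.pairwise_cons, List.forall_mem_cons, List.not_mem_nil, IsEmpty.forall_iff,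
    implies_true, List.Pairwise.nil, and_true]
  exact ⟨⟨habc.ne₁₂ hP, habc.ne₁₃ hP, hax', hayz.ne₁₂ hP, hayz.ne₁₃ hP⟩,
    ⟨habc.ne₂₃ hP, hbxz.ne₁₂ hP, hby', hbxz.ne₁₃ hP⟩, ⟨hcxy.ne₁₂ hP, hcxy.ne₁₃ hP, hcz'⟩,
    ⟨hcxy.ne₂₃ hP, hbxz.ne₂₃ hP⟩, hayz.ne₂₃ hP⟩

theorem IsCQThrough.opposite_ne {x y z : P} (h : IsCQThrough col third a b c x y z) :
    a ≠ x ∧ b ≠ y ∧ c ≠ z := by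
  have hd := h.1
  simp only [List.pairwise_cons, List.forall_mem_cons, List.not_mem_nil, IsEmpty.forall_iff,
    implies_true, List.Pairwise.nil, and_true] at hd
  exact ⟨hd.1.2.2.1, hd.2.1.2.2.1, hd.2.2.1.2.2⟩

theorem IsSymplectic.exists_cqEmbedding (hS : IsSymplectic col third) {m u s : P}
    (hmu : col m u) (hms : col m s) (hs : s ∉ lineSet third m u) :
    ∃ f : CQPt → P, IsCQEmbedding col third f ∧
      m ∈ Set.range f ∧ u ∈ Set.range f ∧ s ∈ Set.range f := by
  have hne : lineSet third m u ≠ lineSet third m s := fun h => hs (h ▸ by simp [lineSet])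
  obtain ⟨f, hinj, hrange, hcol, hthird⟩ :=
    hS.cq m u m s hmu hms hne ⟨m, by simp [lineSet], by simp [lineSet]⟩
  have hsub : lineSet third m u ∪ lineSet third m s ⊆ Set.range f :=
    hrange ▸ fun _ hx _ hT => hT.1 hx
  exact ⟨f, ⟨hinj, hcol, hthird _ _⟩, hsub (by simp [lineSet]), hsub (by simp [lineSet]),
    hsub (by simp [lineSet])⟩

theorem IsSymplectic.opposite_points (hS : IsSymplectic col third) {m u u' s s' : P}
    (hu : IsLine col third m u u') (hs : IsLine col third m s s') (hus : ¬ col u s) (hne : u ≠ s) :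
    col s' u ∧ col s u' ∧ ¬ col s' u' ∧ third s' u = third s u' ∧
      ¬ col m (third s' u) ∧ m ≠ third s' u := by
  have hP := hS.toIsPTS
  have hs_line : s ∉ lineSet third m u := by
    simp only [lineSet, Set.mem_insert_iff, Set.mem_singleton_iff, not_or]
    refine ⟨(hs.ne₁₂ hP).symm, hne.symm, fun h => hus ?_⟩
    rw [h, hu.2]
    exact ((hu.rotate hP).rotate hP).1
  obtain ⟨f, hf, ⟨M, rfl⟩, ⟨U, rfl⟩, ⟨S, rfl⟩⟩ := hS.exists_cqEmbedding hu.1 hs.1 hs_line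
  obtain ⟨hMU, rfl⟩ := hu
  obtain ⟨hMS, rfl⟩ := hs
  rw [hf.col_iff] at hMU hMS hus
  obtain ⟨h₁, h₂, h₃, h₄, h₅, h₆⟩ :=
    CQPt.opposite_points M U S hMU hMS hus fun h => hne (congrArg f h)
  rw [← hf.map_third hMU, ← hf.map_third hMS, ← hf.map_third h₁, ← hf.map_third h₂,
    hf.col_iff, hf.col_iff, hf.col_iff, hf.col_iff, hf.injective.ne_iff]
  exact ⟨h₁, h₂, h₃, congrArg f h₄, h₅, h₆⟩

theorem IsSymplectic.isLine_of_triangle (hS : IsSymplectic col third) {m u u' s s' w : P}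
    (hu : IsLine col third u m u') (hs : IsLine col third s m s') (hw : IsLine col third w s u)
    (hwm : w ≠ m) : IsLine col third w u' s' := by
  have hP := hS.toIsPTS
  replace hu := hu.swap hP
  replace hs := hs.swap hP
  replace hw := (hw.swap hP).rotate hP
  have hs_line : s ∉ lineSet third m u := by
    simp only [lineSet, Set.mem_insert_iff, Set.mem_singleton_iff, not_or]
    refine ⟨(hs.ne₁₂ hP).symm, (hw.ne₁₂ hP).symm, fun h => hwm ?_⟩
    rw [← hw.2, h, hu.2]
    exact ((hu.rotate hP).rotate hP).2
  obtain ⟨f, hf, ⟨M, rfl⟩, ⟨U, rfl⟩, ⟨S, rfl⟩⟩ := hS.exists_cqEmbedding hu.1 hs.1 hs_line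
  obtain ⟨hMU, rfl⟩ := hu
  obtain ⟨hMS, rfl⟩ := hs
  obtain ⟨hUS, rfl⟩ := hw
  rw [hf.col_iff] at hMU hMS hUS
  rw [← hf.map_third hUS, hf.injective.ne_iff] at hwm
  obtain ⟨h₁, h₂⟩ := CQPt.col_third_of_triangle M U S hMU hMS hUS hwm
  rw [← hf.map_third hMU, ← hf.map_third hMS, ← hf.map_third hUS]
  exact IsLine.rotate hP ⟨(hf.col_iff _ _).2 h₁, by rw [← hf.map_third h₁, h₂]⟩

end

/-- In a Fischer space of symplectic type, let ℓ = {a,b,c} be a line contained in two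
distinct complete quadrilaterals π (extra points x,y,z) and π' (extra points p,q,r).
If `p ≁ x`, then the collinearities are exactly p∼y, p∼z, q∼x, q∼z, r∼x, r∼y, and
setting `d := r∧y = q∧z`, `e := r∧x = p∧z`, `f := q∧x = p∧y`, the points
`a,b,c,d,e,f` form a third complete quadrilateral through ℓ
(with lines {a,e,f}, {b,d,f}, {c,d,e}). -/
theorem stmt16 {P : Type*} (col : P → P → Prop) (third : P → P → P)
    (hS : IsSymplectic col third)
    (a b c x y z p q r : P)
    (hπ : IsCQThrough col third a b c x y z)
    (hπ' : IsCQThrough col third a b c p q r)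
    (hdiff : ({x, y, z} : Set P) ≠ {p, q, r})
    (hpx : ¬ col p x) :
    (col p y ∧ col p z ∧ col q x ∧ ¬ col q y ∧ col q z ∧
      col r x ∧ col r y ∧ ¬ col r z) ∧
    third r y = third q z ∧ third r x = third p z ∧ third q x = third p y ∧
    IsCQThrough col third a b c (third r y) (third r x) (third q x) := by
  have hP := hS.toIsPTS
  obtain ⟨hax, hby, hcz⟩ := hπ.opposite_ne
  obtain ⟨-, hab, habc, hay, hayz, hbx, hbxz, hcx, hcxy, -⟩ := hπ
  obtain ⟨-, -, -, haq, haqr, hbp, hbpr, hcp, hcpq, -⟩ := hπ'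
  have hxp : x ≠ p := by
    rintro rfl
    exact hdiff (by rw [← hcxy, ← hbxz, hcpq, hbpr])
  have hxp' : ¬ col x p := fun h => hpx (hP.symm _ _ h)
  obtain ⟨hqx, hpy, hqy, hf, hcf, hcf'⟩ := hS.opposite_points ⟨hcx, hcxy⟩ ⟨hcp, hcpq⟩ hxp' hxp
  obtain ⟨hrx, hpz, hrz, he, hbe, hbe'⟩ := hS.opposite_points ⟨hbx, hbxz⟩ ⟨hbp, hbpr⟩ hxp' hxp
  have hyq : y ≠ q := fun h => hxp <| by
    rw [← hP.third_third c x hcx, ← hP.third_third c p hcp, hcxy, hcpq, h]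
  obtain ⟨hry, hqz, -, hd, had, had'⟩ :=
    hS.opposite_points ⟨hay, hayz⟩ ⟨haq, haqr⟩ (fun h => hqy (hP.symm _ _ h)) hyq
  refine ⟨⟨hpy, hpz, hqx, hqy, hqz, hrx, hry, hrz⟩, hd, he, hf, ?_⟩
  have hcde := hS.isLine_of_triangle ⟨hqz, hd.symm⟩ ⟨hpz, he.symm⟩ ⟨hcp, hcpq⟩ hcz
  have hbdf := hS.isLine_of_triangle ⟨hry, rfl⟩ ⟨hpy, hf.symm⟩ ⟨hbp, hbpr⟩ hby
  have haef := hS.isLine_of_triangle ⟨hrx, rfl⟩ ⟨hqx, rfl⟩ ⟨haq, haqr⟩ hax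
  exact hP.isCQThrough ⟨hab, habc⟩ haef hbdf hcde had hbe hcf had' hbe' hcf'
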